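/- Let H be a complex Hilbert space and let ∘ : E(H) × E(H) → E(H) satisfy the duality condition (A∘ρ is trace-class and Tr((A∘ρ)B) = Tr(ρ(A∘B)) for all ρ ∈ D(H) and A,B ∈ E(H)) and the unit condition (A∘I = I∘A = A for all A ∈ E(H)). Suppose A ∈ E(H), B is a positive bounded operator on H, and ψ ∈ H is a unit vector with rank-one projection P_ψ, such that A∘ρ = Tr(ρB)·P_ψ for every ρ ∈ D(H). Then B = A, there exists λ ∈ [0,1] with A = λP_ψ, and A∘ρ = A^{1/2}ρA^{1/2} for every ρ ∈ D(H). -/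

import Mathlib

/-!
Common setup: effects, density operators, trace, square roots and the strong
operator topology on a complex Hilbert space `H`, together with the five
conditions (duality, unit, weak associativity, continuity, purity) defining a
sequential product on the set `E(H)` of quantum effects.
-/

set_option maxHeartbeats 1000000
set_option synthInstance.maxHeartbeats 1000000

open scoped InnerProductSpace ComplexOrder
open Filter

noncomputable section

variable (H : Type*) [NormedAddCommGroup H] [InnerProductSpace ℂ H] [CompleteSpace H]

/-- The index set of a fixed Hilbert basis of `H`. -/
def stdIdx : Set H := (exists_hilbertBasis ℂ H).choose

/-- A fixed Hilbert basis of `H`. -/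
def stdBasis : HilbertBasis (stdIdx H) ℂ H := (exists_hilbertBasis ℂ H).choose_spec.choose

variable {H}

/-- The positive square root `A^{1/2}` of a (positive) operator `A`. -/
def sqrtOp (A : H →L[ℂ] H) : H →L[ℂ] H := CFC.sqrt A

/-- The trace of an operator, computed in the fixed Hilbert basis. -/
def traceOp (T : H →L[ℂ] H) : ℂ := ∑' i, ⟪(stdBasis H i : H), T (stdBasis H i)⟫_ℂ

/-- `T` is trace-class: `|T| = (T*T)^{1/2}` has finite trace. -/
def IsTraceClass (T : H →L[ℂ] H) : Prop :=
  Summable fun i => ⟪(stdBasis H i : H), sqrtOp (star T * T) (stdBasis H i)⟫_ℂ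

/-- A quantum effect: an operator `A` with `0 ≤ A ≤ 1` in the Loewner order (in
particular `A` is bounded and self-adjoint).  `E(H)` is the set of effects. -/
def IsEffect (A : H →L[ℂ] H) : Prop := 0 ≤ A ∧ A ≤ 1

/-- A density operator: a positive trace-class operator of unit trace.
`D(H)` is the set of density operators. -/
def IsDensity (ρ : H →L[ℂ] H) : Prop := 0 ≤ ρ ∧ IsTraceClass ρ ∧ traceOp ρ = 1

variable (H) in
/-- The strong operator topology on bounded operators: the topology of pointwise
convergence (as maps into `H` with its norm topology). -/
def sot : TopologicalSpace (H →L[ℂ] H) :=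
  TopologicalSpace.induced (fun T => (T : H → H)) inferInstance

/-- `p` is a rank-one orthogonal projection. -/
def IsRankOneProjection (p : H →L[ℂ] H) : Prop :=
  IsIdempotentElem p ∧ IsSelfAdjoint p ∧ LinearMap.rank (p : H →ₗ[ℂ] H) = 1

/-- `P_ψ`: the rank-one orthogonal projection onto the span of a unit vector `ψ`,
`x ↦ ⟪ψ, x⟫ • ψ`. -/
def projVec (ψ : H) : H →L[ℂ] H := (innerSL ℂ ψ).smulRight ψ

/-- `op` is a binary operation on `E(H)`: it maps pairs of effects to effects. -/
def EffectClosed (op : (H →L[ℂ] H) → (H →L[ℂ] H) → (H →L[ℂ] H)) : Prop :=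
  ∀ A B, IsEffect A → IsEffect B → IsEffect (op A B)

/-- Condition 1 (Duality): for all effects `A, B` and densities `ρ`, the operator
`A ∘ ρ` is trace-class and `Tr((A∘ρ)B) = Tr(ρ(A∘B))`. -/
def DualityCond (op : (H →L[ℂ] H) → (H →L[ℂ] H) → (H →L[ℂ] H)) : Prop :=
  ∀ A B ρ : H →L[ℂ] H, IsEffect A → IsEffect B → IsDensity ρ →
    IsTraceClass (op A ρ) ∧ traceOp (op A ρ * B) = traceOp (ρ * op A B)

/-- Condition 2 (Unit): `A ∘ I = I ∘ A = A` for every effect `A`. -/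
def UnitCond (op : (H →L[ℂ] H) → (H →L[ℂ] H) → (H →L[ℂ] H)) : Prop :=
  ∀ A : H →L[ℂ] H, IsEffect A → op A 1 = A ∧ op 1 A = A

/-- Condition 3 (Weak associativity): `A² ∘ B = A ∘ (A ∘ B)` for all effects `A, B`. -/
def WeakAssocCond (op : (H →L[ℂ] H) → (H →L[ℂ] H) → (H →L[ℂ] H)) : Prop :=
  ∀ A B : H →L[ℂ] H, IsEffect A → IsEffect B → op (A * A) B = op A (op A B)

/-- Condition 4 (Continuity): for each fixed effect `B`, the map `A ↦ A ∘ B` is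
continuous on `E(H)` for the strong operator topology. -/
def ContinuityCond (op : (H →L[ℂ] H) → (H →L[ℂ] H) → (H →L[ℂ] H)) : Prop :=
  ∀ B : H →L[ℂ] H, IsEffect B →
    @ContinuousOn _ _ (sot H) (sot H) (fun A => op A B) {A | IsEffect A}

/-- Condition 5 (Purity): for every effect `A` and every rank-one orthogonal
projection `p`, the operator `A ∘ p` has rank at most `1`. -/
def PurityCond (op : (H →L[ℂ] H) → (H →L[ℂ] H) → (H →L[ℂ] H)) : Prop :=
  ∀ A p : H →L[ℂ] H, IsEffect A → IsRankOneProjection p →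
    LinearMap.rank ((op A p) : H →ₗ[ℂ] H) ≤ 1

/-!
Testing the duality condition against the pure states `ρ = P_φ` gives
`⟪φ, (A∘C) φ⟫ = ⟪φ, B φ⟫ ⟪ψ, C ψ⟫` for every unit vector `φ`, hence `A∘C = ⟪ψ, C ψ⟫ B` for
every effect `C`. The unit condition (`C = I`) forces `B = A`, and comparing `C = P_ψ` with the
hypothesis at `ρ = P_ψ` gives `A = λ P_ψ` with `λ = ⟪ψ, A ψ⟫ ∈ [0,1]`. Then `A^{1/2} = √λ P_ψ`,
and both sides of the last identity equal `λ ⟪ψ, ρ ψ⟫ P_ψ`.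
-/

open InnerProductSpace

omit [CompleteSpace H] in
theorem ContinuousLinearMap.ext_inner_map_of_norm_eq_one {S T : H →L[ℂ] H}
    (h : ∀ φ : H, ‖φ‖ = 1 → ⟪φ, S φ⟫_ℂ = ⟪φ, T φ⟫_ℂ) : S = T := by
  have hall (x : H) : ⟪S x, x⟫_ℂ = ⟪T x, x⟫_ℂ := by
    rcases eq_or_ne x 0 with rfl | hx
    · simp
    have hx' : (‖x‖ : ℂ) ≠ 0 := by exact_mod_cast norm_ne_zero_iff.mpr hx
    have hunit := h ((‖x‖ : ℂ)⁻¹ • x) (by simp [norm_smul, hx])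
    simp only [map_smul, inner_smul_left, inner_smul_right, ← mul_assoc] at hunit
    rw [← inner_conj_symm, mul_left_cancel₀ (by simp [hx']) hunit, inner_conj_symm]
  exact ContinuousLinearMap.coe_injective ((ext_inner_map _ _).mp hall)

theorem IsEffect.exists_inner_eq_ofReal {A : H →L[ℂ] H} (hA : IsEffect A) {ψ : H}
    (hψ : ‖ψ‖ = 1) :
    ∃ l ∈ Set.Icc (0 : ℝ) 1, ⟪ψ, A ψ⟫_ℂ = l := by
  have hlow : 0 ≤ ⟪ψ, A ψ⟫_ℂ :=
    ((ContinuousLinearMap.nonneg_iff_isPositive _).mp hA.1).inner_nonneg_right ψ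
  have hup : 0 ≤ ⟪ψ, (1 - A) ψ⟫_ℂ :=
    ((ContinuousLinearMap.nonneg_iff_isPositive _).mp (sub_nonneg.mpr hA.2)).inner_nonneg_right ψ
  rw [sub_apply, one_apply_eq_self, inner_sub_right, inner_self_eq_norm_sq_to_K, hψ,
    sub_nonneg] at hup
  refine ⟨(⟪ψ, A ψ⟫_ℂ).re, ⟨(Complex.nonneg_iff.mp hlow).1, ?_⟩, ?_⟩
  · simpa using (Complex.le_def.mp hup).1
  · exact Complex.ext rfl (Complex.nonneg_iff.mp hlow).2.symm

theorem isEffect_one : IsEffect (1 : H →L[ℂ] H) := ⟨zero_le_one, le_rfl⟩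

omit [CompleteSpace H] in
theorem projVec_apply (ψ x : H) : projVec ψ x = ⟪ψ, x⟫_ℂ • ψ := rfl

omit [CompleteSpace H] in
theorem projVec_eq_rankOne (ψ : H) : projVec ψ = rankOne ℂ ψ ψ := rfl

theorem isStarProjection_projVec {ψ : H} (hψ : ‖ψ‖ = 1) : IsStarProjection (projVec ψ) :=
  projVec_eq_rankOne ψ ▸ isStarProjection_rankOne_self hψ

theorem isEffect_projVec {ψ : H} (hψ : ‖ψ‖ = 1) : IsEffect (projVec ψ) :=
  (isStarProjection_projVec hψ).mem_Icc

omit [CompleteSpace H] in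
theorem projVec_apply_self {ψ : H} (hψ : ‖ψ‖ = 1) : projVec ψ ψ = ψ := by
  simp [projVec_apply, inner_self_eq_norm_sq_to_K, hψ]

omit [CompleteSpace H] in
theorem projVec_mul_mul_projVec (ψ : H) (X : H →L[ℂ] H) :
    projVec ψ * X * projVec ψ = ⟪ψ, X ψ⟫_ℂ • projVec ψ := by
  ext x
  simp only [mul_apply_eq_comp, smul_apply, projVec_apply, map_smul, smul_smul, mul_comm]

theorem sqrtOp_ofReal_smul_projVec {ψ : H} (hψ : ‖ψ‖ = 1) {l : ℝ} (hl : 0 ≤ l) :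
    sqrtOp ((l : ℂ) • projVec ψ) = (√l : ℂ) • projVec ψ := by
  refine CFC.sqrt_unique ?_ (smul_nonneg (by exact_mod_cast Real.sqrt_nonneg l)
    (isStarProjection_projVec hψ).nonneg)
  rw [smul_mul_smul, (isStarProjection_projVec hψ).isIdempotentElem.eq, ← Complex.ofReal_mul,
    Real.mul_self_sqrt hl]

theorem traceOp_smul (c : ℂ) (T : H →L[ℂ] H) : traceOp (c • T) = c * traceOp T := by
  rw [traceOp, traceOp, ← tsum_mul_left]
  simp only [smul_apply, inner_smul_right]

theorem traceOp_mul_projVec (X : H →L[ℂ] H) (φ : H) :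
    traceOp (X * projVec φ) = ⟪φ, X φ⟫_ℂ := by
  rw [traceOp, ← (stdBasis H).tsum_inner_mul_inner φ (X φ)]
  simp [projVec_apply]

theorem traceOp_projVec_mul (φ : H) (X : H →L[ℂ] H) :
    traceOp (projVec φ * X) = ⟪φ, X φ⟫_ℂ := by
  rw [traceOp, ← ContinuousLinearMap.adjoint_inner_left,
    ← (stdBasis H).tsum_inner_mul_inner (ContinuousLinearMap.adjoint X φ) φ]
  simp [projVec_apply, ContinuousLinearMap.adjoint_inner_left]

theorem isDensity_projVec {φ : H} (hφ : ‖φ‖ = 1) : IsDensity (projVec φ) := by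
  have hP := isStarProjection_projVec hφ
  refine ⟨hP.nonneg, ?_, ?_⟩
  · rw [IsTraceClass, hP.isSelfAdjoint.star_eq, hP.isIdempotentElem.eq, sqrtOp,
      CFC.sqrt_unique hP.isIdempotentElem.eq hP.nonneg]
    refine ((stdBasis H).summable_inner_mul_inner φ φ).congr fun i => ?_
    simp [projVec_apply]
  · simpa [inner_self_eq_norm_sq_to_K, hφ] using traceOp_mul_projVec 1 φ

theorem apply_eq_inner_smul_of_duality
    {op : (H →L[ℂ] H) → (H →L[ℂ] H) → (H →L[ℂ] H)} {A B : H →L[ℂ] H} {ψ : H}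
    (hdual : DualityCond op) (hA : IsEffect A)
    (h : ∀ ρ : H →L[ℂ] H, IsDensity ρ → op A ρ = traceOp (ρ * B) • projVec ψ)
    {C : H →L[ℂ] H} (hC : IsEffect C) : op A C = ⟪ψ, C ψ⟫_ℂ • B := by
  refine ContinuousLinearMap.ext_inner_map_of_norm_eq_one fun φ hφ => ?_
  have hdensity := isDensity_projVec hφ
  have hpair := (hdual A C (projVec φ) hA hC hdensity).2
  rw [h _ hdensity, smul_mul_assoc, traceOp_smul, traceOp_projVec_mul, traceOp_projVec_mul,
    traceOp_projVec_mul] at hpair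
  rw [← hpair, smul_apply, inner_smul_right, mul_comm]

theorem rank_one_case_general
    (op : (H →L[ℂ] H) → (H →L[ℂ] H) → (H →L[ℂ] H))
    (hdual : DualityCond op) (hunit : UnitCond op)
    (A : H →L[ℂ] H) (hA : IsEffect A)
    (B : H →L[ℂ] H)
    (ψ : H) (hψ : ‖ψ‖ = 1)
    (h : ∀ ρ : H →L[ℂ] H, IsDensity ρ → op A ρ = traceOp (ρ * B) • projVec ψ) :
    B = A ∧
    (∃ l : ℝ, l ∈ Set.Icc (0 : ℝ) 1 ∧ A = (l : ℂ) • projVec ψ) ∧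
    ∀ ρ : H →L[ℂ] H, IsDensity ρ → op A ρ = sqrtOp A * ρ * sqrtOp A := by
  have hform {C} (hC : IsEffect C) := apply_eq_inner_smul_of_duality hdual hA h hC
  have hBA : B = A := by
    simpa [inner_self_eq_norm_sq_to_K, hψ, (hunit A hA).1] using (hform isEffect_one).symm
  subst B
  obtain ⟨l, hl, hlψ⟩ := hA.exists_inner_eq_ofReal hψ
  have hAl : A = (l : ℂ) • projVec ψ := by
    calc A = ⟪ψ, projVec ψ ψ⟫_ℂ • A := by
          simp [projVec_apply_self hψ, inner_self_eq_norm_sq_to_K, hψ]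
      _ = op A (projVec ψ) := (hform (isEffect_projVec hψ)).symm
      _ = (l : ℂ) • projVec ψ := by rw [h _ (isDensity_projVec hψ), traceOp_projVec_mul, hlψ]
  refine ⟨rfl, ⟨l, hl, hAl⟩, fun ρ hρ => ?_⟩
  rw [h ρ hρ, hAl, sqrtOp_ofReal_smul_projVec hψ hl.1, smul_mul_assoc, smul_mul_smul,
    mul_smul_comm, traceOp_smul, traceOp_mul_projVec, projVec_mul_mul_projVec, smul_smul,
    ← Complex.ofReal_mul, Real.mul_self_sqrt hl.1]

/-- Case (iii) of the characterization theorem: if `∘ : E(H) × E(H) → E(H)` satisfies the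
duality and unit conditions, `A` is an effect, `B` is a positive bounded operator, `ψ` is a
unit vector, and `A ∘ ρ = Tr(ρB)·P_ψ` for every density operator `ρ`, then `B = A`,
`A = λP_ψ` for some `λ ∈ [0,1]`, and `A ∘ ρ = A^{1/2} ρ A^{1/2}` for every density `ρ`. -/
theorem rank_one_case
    (op : (H →L[ℂ] H) → (H →L[ℂ] H) → (H →L[ℂ] H)) (hmap : EffectClosed op)
    (hdual : DualityCond op) (hunit : UnitCond op)
    (A : H →L[ℂ] H) (hA : IsEffect A)
    (B : H →L[ℂ] H) (hB : 0 ≤ B)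
    (ψ : H) (hψ : ‖ψ‖ = 1)
    (h : ∀ ρ : H →L[ℂ] H, IsDensity ρ → op A ρ = traceOp (ρ * B) • projVec ψ) :
    B = A ∧
    (∃ l : ℝ, l ∈ Set.Icc (0 : ℝ) 1 ∧ A = (l : ℂ) • projVec ψ) ∧
    ∀ ρ : H →L[ℂ] H, IsDensity ρ → op A ρ = sqrtOp A * ρ * sqrtOp A :=
  rank_one_case_general op hdual hunit A hA B ψ hψ h

end
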